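/- Let U be an n×n complex unitary matrix with spectral decomposition U = Σ_r e^{iθ_r} F_r, and let x, y be unit vectors in ℂⁿ. Then perfect state transfer occurs from x to y (i.e., there exist t ∈ ℤ and γ ∈ ℂ with U^t x = γ y) if and only if both: (i) x and y are strongly cospectral, i.e., for each r there is μ_r ∈ ℂ with |μ_r| = 1 and F_r x = μ_r F_r y; and (ii) there exists t ∈ ℤ such that e^{itθ_r} μ_r = e^{itθ_s} μ_s for all r, s in the eigenvalue support Θ_x = {r : F_r x ≠ 0}. -/

import Mathlib

open Matrix Complex Finset

/-- The Euclidean norm of a vector in `ℂⁿ`. -/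
noncomputable def euclNorm {ι : Type*} [Fintype ι] (v : ι → ℂ) : ℝ :=
  Real.sqrt (∑ i, ‖v i‖ ^ 2)

/-- The Euclidean inner product `⟨v, w⟩ = ∑ᵢ vᵢ conj(wᵢ)` on `ℂⁿ`. -/
noncomputable def euclInner {ι : Type*} [Fintype ι] (v w : ι → ℂ) : ℂ :=
  ∑ i, v i * star (w i)

/-- Pretty good state transfer from `x` to `y` under the unitary `U`. -/
def PGST {ι : Type*} [Fintype ι] [DecidableEq ι] (U : Matrix ι ι ℂ) (x y : ι → ℂ) : Prop :=
  ∃ γ : ℂ, ‖γ‖ = 1 ∧ ∀ ε > 0, ∃ t : ℤ, euclNorm ((U ^ t).mulVec x - γ • y) < ε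


/-!
Since the `F_r` are pairwise orthogonal idempotents summing to `1`, `U^t = ∑ e^{itθ_r} F_r` for
every `t : ℤ`, and a vector is determined by its components `F_r v`. Hence `U^t x = γ y` says
exactly that `e^{itθ_r} F_r x = γ F_r y` for all `r`. Given PST, `U^t` is unitary, so `|γ| = 1`
and `μ_r = e^{-itθ_r} γ` works, with `e^{itθ_r} μ_r = γ` independent of `r`. Conversely the
common value of `e^{itθ_r} μ_r` on the support is the phase `γ`; off the support both `F_r x`
and `F_r y` vanish.
-/

section Spectral

variable {m ι R : Type*} [Fintype ι] {F : ι → Matrix m m R}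

theorem mul_sum_smul_of_orthogonal [Fintype m] [CommSemiring R] (hidem : ∀ r, F r * F r = F r)
    (horth : ∀ r s, r ≠ s → F r * F s = 0) (f : ι → R) (r : ι) :
    F r * ∑ s, f s • F s = f r • F r := by
  rw [Finset.mul_sum, Finset.sum_eq_single_of_mem r (mem_univ r)
    fun s _ hs => by rw [Matrix.mul_smul, horth r s hs.symm, smul_zero], Matrix.mul_smul, hidem]

theorem sum_smul_mul_sum_smul [Fintype m] [CommSemiring R] (hidem : ∀ r, F r * F r = F r)
    (horth : ∀ r s, r ≠ s → F r * F s = 0) (f g : ι → R) :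
    (∑ r, f r • F r) * ∑ r, g r • F r = ∑ r, (f r * g r) • F r := by
  simp only [Finset.sum_mul, Matrix.smul_mul, mul_sum_smul_of_orthogonal hidem horth, smul_smul]

theorem sum_smul_zpow [Fintype m] [DecidableEq m] [Field R] (hidem : ∀ r, F r * F r = F r)
    (horth : ∀ r s, r ≠ s → F r * F s = 0) (hsum : ∑ r, F r = 1) {c : ι → R}
    (hc : ∀ r, c r ≠ 0) (t : ℤ) : (∑ r, c r • F r) ^ t = ∑ r, c r ^ t • F r := by
  have hmul (a b : ℤ) :
      (∑ r, c r ^ a • F r) * ∑ r, c r ^ b • F r = ∑ r, c r ^ (a + b) • F r := by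
    simp only [sum_smul_mul_sum_smul hidem horth, zpow_add₀ (hc _)]
  have hinv : (∑ r, c r ^ (-1 : ℤ) • F r) * ∑ r, c r • F r = 1 := by
    simpa [hsum] using hmul (-1) 1
  have hdet := isUnit_det_of_left_inverse hinv
  induction t using Int.induction_on with
  | zero => simp [hsum]
  | succ i ih => rw [zpow_add_one hdet, ih, ← hmul]; simp
  | pred i ih => rw [zpow_sub_one hdet, ih, inv_eq_left_inv hinv, hmul, sub_eq_add_neg]

theorem conjTranspose_sum_smul_mul_self [Fintype m] [DecidableEq m] [CommSemiring R]
    [StarRing R] (hherm : ∀ r, (F r)ᴴ = F r) (hidem : ∀ r, F r * F r = F r)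
    (horth : ∀ r s, r ≠ s → F r * F s = 0) (hsum : ∑ r, F r = 1) {c : ι → R}
    (hc : ∀ r, star (c r) * c r = 1) : (∑ r, c r • F r)ᴴ * ∑ r, c r • F r = 1 := by
  simp only [conjTranspose_sum, conjTranspose_smul, hherm, sum_smul_mul_sum_smul hidem horth,
    hc, one_smul, hsum]

theorem eq_of_forall_mulVec_eq [Fintype m] [DecidableEq m] [Semiring R] (hsum : ∑ r, F r = 1)
    {v w : m → R} (h : ∀ r, F r *ᵥ v = F r *ᵥ w) : v = w := by
  rw [← one_mulVec v, ← one_mulVec w, ← hsum, sum_mulVec, sum_mulVec]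
  exact Finset.sum_congr rfl fun r _ => h r

theorem exists_mulVec_ne_zero [Fintype m] [DecidableEq m] [Semiring R] (hsum : ∑ r, F r = 1)
    {x : m → R} (hx : x ≠ 0) : ∃ r, F r *ᵥ x ≠ 0 := by
  by_contra! h
  exact hx (eq_of_forall_mulVec_eq hsum fun r => by rw [h, mulVec_zero])

theorem sum_smul_mulVec_eq_smul_iff [Fintype m] [DecidableEq m] [CommSemiring R]
    (hidem : ∀ r, F r * F r = F r) (horth : ∀ r s, r ≠ s → F r * F s = 0)
    (hsum : ∑ r, F r = 1) (c : ι → R) (γ : R) (x y : m → R) :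
    (∑ r, c r • F r) *ᵥ x = γ • y ↔ ∀ r, c r • F r *ᵥ x = γ • F r *ᵥ y := by
  refine ⟨fun h r => ?_, fun h => eq_of_forall_mulVec_eq hsum fun r => ?_⟩
  · rw [← smul_mulVec, ← mul_sum_smul_of_orthogonal hidem horth c r, ← mulVec_mulVec, h,
      mulVec_smul]
  · rw [mulVec_mulVec, mul_sum_smul_of_orthogonal hidem horth, smul_mulVec, mulVec_smul, h]

end Spectral

section EuclNorm

variable {m : Type*} [Fintype m]

theorem ofReal_euclNorm_sq (v : m → ℂ) : ((euclNorm v ^ 2 : ℝ) : ℂ) = star v ⬝ᵥ v := by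
  rw [euclNorm, Real.sq_sqrt (by positivity)]
  push_cast
  simp [dotProduct, Complex.conj_mul']

theorem euclNorm_mulVec_of_conjTranspose_mul_self [DecidableEq m] {A : Matrix m m ℂ}
    (hA : Aᴴ * A = 1) (v : m → ℂ) : euclNorm (A *ᵥ v) = euclNorm v := by
  have hsq : ((euclNorm (A *ᵥ v) ^ 2 : ℝ) : ℂ) = ((euclNorm v ^ 2 : ℝ) : ℂ) := by
    rw [ofReal_euclNorm_sq, ofReal_euclNorm_sq, star_mulVec, ← dotProduct_mulVec,
      mulVec_mulVec, hA, one_mulVec]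
  exact (pow_left_inj₀ (Real.sqrt_nonneg _) (Real.sqrt_nonneg _) two_ne_zero).mp
    (Complex.ofReal_injective hsq)

theorem euclNorm_smul (c : ℂ) (v : m → ℂ) : euclNorm (c • v) = ‖c‖ * euclNorm v := by
  simp only [euclNorm, Pi.smul_apply, smul_eq_mul, norm_mul, mul_pow, ← Finset.mul_sum,
    Real.sqrt_mul (sq_nonneg _), Real.sqrt_sq (norm_nonneg c)]

theorem norm_eq_one_of_mulVec_eq_smul [DecidableEq m] {A : Matrix m m ℂ} (hA : Aᴴ * A = 1)
    {x y : m → ℂ} {γ : ℂ} (hx : euclNorm x = 1) (hy : euclNorm y = 1)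
    (h : A *ᵥ x = γ • y) : ‖γ‖ = 1 := by
  have hnorm := congrArg euclNorm h
  rwa [euclNorm_mulVec_of_conjTranspose_mul_self hA, hx, euclNorm_smul, hy, mul_one,
    eq_comm] at hnorm

theorem ne_zero_of_euclNorm_eq_one {v : m → ℂ} (hv : euclNorm v = 1) : v ≠ 0 := by
  rintro rfl
  simp [euclNorm] at hv

end EuclNorm

theorem Complex.exp_ofReal_mul_I_zpow (θ : ℝ) (t : ℤ) :
    Complex.exp (θ * I) ^ t = Complex.exp (t * θ * I) := by
  rw [← exp_int_mul, mul_assoc]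

theorem Complex.star_exp_ofReal_mul_I_mul_self (θ : ℝ) :
    star (Complex.exp (θ * I)) * Complex.exp (θ * I) = 1 := by
  rw [Complex.star_def, conj_mul', norm_exp_ofReal_mul_I]
  norm_num

theorem stmt6_general {n : ℕ} {ι : Type*} [Fintype ι]
    (θ : ι → ℝ) (F : ι → Matrix (Fin n) (Fin n) ℂ)
    (hherm : ∀ r, (F r)ᴴ = F r)
    (hidem : ∀ r, F r * F r = F r)
    (horth : ∀ r s, r ≠ s → F r * F s = 0)
    (hsum : ∑ r, F r = 1)
    (U : Matrix (Fin n) (Fin n) ℂ)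
    (hU : U = ∑ r, Complex.exp (θ r * Complex.I) • F r)
    (x y : Fin n → ℂ) (hx : euclNorm x = 1) (hy : euclNorm y = 1) :
    (∃ (t : ℤ) (γ : ℂ), (U ^ t).mulVec x = γ • y) ↔
      ∃ μ : ι → ℂ,
        (∀ r, ‖μ r‖ = 1 ∧ (F r).mulVec x = μ r • (F r).mulVec y) ∧
        ∃ t : ℤ, ∀ r s, (F r).mulVec x ≠ 0 → (F s).mulVec x ≠ 0 →
          Complex.exp ((t : ℂ) * θ r * Complex.I) * μ r =
            Complex.exp ((t : ℂ) * θ s * Complex.I) * μ s := by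
  have hUt (t : ℤ) : U ^ t = ∑ r, Complex.exp (θ r * I) ^ t • F r :=
    hU ▸ sum_smul_zpow hidem horth hsum (fun r => exp_ne_zero _) t
  have hunit (t : ℤ) : (U ^ t)ᴴ * U ^ t = 1 :=
    hUt t ▸ conjTranspose_sum_smul_mul_self hherm hidem horth hsum fun r => by
      rw [star_zpow₀, ← mul_zpow, star_exp_ofReal_mul_I_mul_self, _root_.one_zpow]
  have hcomp (t : ℤ) (γ : ℂ) : U ^ t *ᵥ x = γ • y ↔
      ∀ r, Complex.exp (θ r * I) ^ t • F r *ᵥ x = γ • F r *ᵥ y :=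
    hUt t ▸ sum_smul_mulVec_eq_smul_iff hidem horth hsum _ γ x y
  have he (t : ℤ) (r : ι) : Complex.exp (θ r * I) ^ t ≠ 0 := zpow_ne_zero _ (exp_ne_zero _)
  simp only [← Complex.exp_ofReal_mul_I_zpow]
  constructor
  · rintro ⟨t, γ, hxy⟩
    have hγ : ‖γ‖ = 1 := norm_eq_one_of_mulVec_eq_smul (hunit t) hx hy hxy
    refine ⟨fun r => (Complex.exp (θ r * I) ^ t)⁻¹ * γ, fun r => ⟨?_, ?_⟩, t,
      fun r s _ _ => ?_⟩
    · simp [hγ, norm_exp_ofReal_mul_I]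
    · rw [mul_smul, ← (hcomp t γ).mp hxy r, inv_smul_smul₀ (he t r)]
    · rw [mul_inv_cancel_left₀ (he t r), mul_inv_cancel_left₀ (he t s)]
  · rintro ⟨μ, hμ, t, hphase⟩
    obtain ⟨r₀, hr₀⟩ := exists_mulVec_ne_zero hsum (ne_zero_of_euclNorm_eq_one hx)
    refine ⟨t, Complex.exp (θ r₀ * I) ^ t * μ r₀, (hcomp _ _).mpr fun r => ?_⟩
    by_cases hr : F r *ᵥ x = 0
    · have hμr : μ r ≠ 0 := norm_ne_zero_iff.mp ((hμ r).1.symm ▸ one_ne_zero)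
      have hry : F r *ᵥ y = 0 := (smul_eq_zero.mp ((hμ r).2.symm.trans hr)).resolve_left hμr
      rw [hr, hry, smul_zero, smul_zero]
    · rw [(hμ r).2, smul_smul, hphase r r₀ hr hr₀]

theorem stmt6 {n : ℕ} {ι : Type*} [Fintype ι]
    (θ : ι → ℝ) (F : ι → Matrix (Fin n) (Fin n) ℂ)
    (hdist : ∀ r s, Complex.exp (θ r * Complex.I) = Complex.exp (θ s * Complex.I) → r = s)
    (hherm : ∀ r, (F r)ᴴ = F r)
    (hidem : ∀ r, F r * F r = F r)
    (horth : ∀ r s, r ≠ s → F r * F s = 0)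
    (hsum : ∑ r, F r = 1)
    (U : Matrix (Fin n) (Fin n) ℂ)
    (hU : U = ∑ r, Complex.exp (θ r * Complex.I) • F r)
    (x y : Fin n → ℂ) (hx : euclNorm x = 1) (hy : euclNorm y = 1) :
    (∃ (t : ℤ) (γ : ℂ), (U ^ t).mulVec x = γ • y) ↔
      ∃ μ : ι → ℂ,
        (∀ r, ‖μ r‖ = 1 ∧ (F r).mulVec x = μ r • (F r).mulVec y) ∧
        ∃ t : ℤ, ∀ r s, (F r).mulVec x ≠ 0 → (F s).mulVec x ≠ 0 →
          Complex.exp ((t : ℂ) * θ r * Complex.I) * μ r =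
            Complex.exp ((t : ℂ) * θ s * Complex.I) * μ s :=
  stmt6_general θ F hherm hidem horth hsum U hU x y hx hy
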